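/- Let g(s) := s e^{|ln s|^{1/2}} for s > 0. Then for every s₀ ∈ (0, e^{−1}] and every s ∈ [s₀, e^{−1}], s₀ / (2 |ln s₀|^{1/2}) ≤ g(s)/g'(s) − s, where g'(s) = e^{|ln s|^{1/2}} ( 1 − 1/(2 |ln s|^{1/2}) ). -/
import Mathlib


open Real Set

noncomputable section

/-- `g(s) := s e^{|ln s|^{1/2}}`. -/
def gfun (s : ℝ) : ℝ := s * Real.exp (Real.sqrt |Real.log s|)

/-- `g'(s) = e^{|ln s|^{1/2}} (1 − 1/(2|ln s|^{1/2}))`. -/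
def gder (s : ℝ) : ℝ :=
  Real.exp (Real.sqrt |Real.log s|) * (1 - 1 / (2 * Real.sqrt |Real.log s|))

theorem statement17 (s₀ : ℝ) (hs₀ : s₀ ∈ Ioc (0 : ℝ) (Real.exp (-1)))
    (s : ℝ) (hs : s ∈ Icc s₀ (Real.exp (-1))) :
    s₀ / (2 * Real.sqrt |Real.log s₀|) ≤ gfun s / gder s - s := by
  obtain ⟨hs₀pos, hs₀le⟩ := hs₀
  obtain ⟨hs₀s, hse⟩ := hs
  have hspos : 0 < s := lt_of_lt_of_le hs₀pos hs₀s
  have hlogs : Real.log s ≤ -1 := by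
    have := Real.log_le_log hspos hse
    rwa [Real.log_exp] at this
  have hlogs₀ : Real.log s₀ ≤ -1 := by
    have := Real.log_le_log hs₀pos hs₀le
    rwa [Real.log_exp] at this
  have habs : |Real.log s| = -Real.log s := abs_of_nonpos (by linarith)
  have habs₀ : |Real.log s₀| = -Real.log s₀ := abs_of_nonpos (by linarith)
  set t := Real.sqrt |Real.log s| with ht
  set t₀ := Real.sqrt |Real.log s₀| with ht₀
  have h1t : 1 ≤ t := by
    rw [ht, show (1:ℝ) = Real.sqrt 1 by rw [Real.sqrt_one]]
    exact Real.sqrt_le_sqrt (by rw [habs]; linarith)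
  have htt₀ : t ≤ t₀ := by
    apply Real.sqrt_le_sqrt
    rw [habs, habs₀]
    have := Real.log_le_log hs₀pos hs₀s
    linarith
  have h1t₀ : 1 ≤ t₀ := le_trans h1t htt₀
  have hE : (0:ℝ) < Real.exp t := Real.exp_pos t
  have h2t1 : (0:ℝ) < 2 * t - 1 := by linarith
  have key : gfun s / gder s - s = s / (2 * t - 1) := by
    rw [gfun, gder]
    rw [show Real.sqrt |Real.log s| = t from rfl]
    field_simp
    ring
  rw [key]
  apply div_le_div₀ (le_of_lt hspos) hs₀s h2t1
  linarith
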